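/- arXiv:2601.13970 — 5 statements merged into one kernel-verified Lean document; each statement's English description precedes it below -/
import Mathlib

section
/- For density matrices ρ and σ on ℂ^d and every α ∈ [0,1], the optimal type-II error satisfies β_α(ρ,σ) = sup_{t ≥ 0} { Tr[σ Π_t] + t (Tr[ρ (I − Π_t)] − α) }, where Π_t denotes the orthogonal projection onto the span of the eigenvectors of the Hermitian matrix tρ − σ with nonnegative eigenvalues. -/
/-!
Write `Π_t` for `nonnegProj (t • ρ - σ)`, and `x_T = Tr[Tρ]`, `y_T = Tr[Tσ]` for a test `T`.
Since `Π_t` maximizes `T ↦ Tr[T(tρ - σ)]` over all tests, the objective at `t ≥ 0` is at most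
`1 - y_T` whenever `x_T ≤ α` (weak duality). Conversely, `T ↦ (x_T, y_T)` maps the compact convex
set of tests onto a compact convex subset of the plane, so a separating line yields, for every
`w < β_α(ρ, σ)`, a slope `t ≥ 0` with `y_T - t x_T < 1 - w - t α` for all tests; at the test
`1 - Π_t` this inequality says that the objective at `t` exceeds `w`. (When `α = 0` the supremum
need not be attained, so no exact multiplier exists in general.)
-/

open Matrix MeasureTheory BigOperators ComplexOrder

noncomputable section

/-- The optimal quantum type-II error trade-off: infimum of `1 - Tr[Πσ]` over
tests `0 ⪯ Π ⪯ I` with type-I error `Tr[Πρ] ≤ α`. -/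
def qBeta {d : ℕ} (α : ℝ) (ρ σ : Matrix (Fin d) (Fin d) ℂ) : ℝ :=
  sInf { b : ℝ | ∃ T : Matrix (Fin d) (Fin d) ℂ,
    T.PosSemidef ∧ (1 - T).PosSemidef ∧ ((T * ρ).trace.re ≤ α) ∧
    b = 1 - (T * σ).trace.re }

/-- The orthogonal projection onto the span of the eigenvectors of a Hermitian
matrix `A` with nonnegative eigenvalues (defined as `0` if `A` is not Hermitian). -/
def nonnegProj {d : ℕ} (A : Matrix (Fin d) (Fin d) ℂ) : Matrix (Fin d) (Fin d) ℂ :=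
  if hA : A.IsHermitian then
    (hA.eigenvectorUnitary : Matrix (Fin d) (Fin d) ℂ) *
      Matrix.diagonal (fun i => if 0 ≤ hA.eigenvalues i then (1 : ℂ) else 0) *
      star (hA.eigenvectorUnitary : Matrix (Fin d) (Fin d) ℂ)
  else 0

open scoped Pointwise

lemma nonneg_of_forall_lt_add_mul {c u a : ℝ} (h : ∀ s, 0 ≤ s → u < c + s * a) : 0 ≤ a := by
  by_contra! ha
  have hs : (c - u) / -a * a = u - c := by
    rw [div_mul_eq_mul_div, div_eq_iff (neg_ne_zero.2 ha.ne)]; ring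
  have h0 := h 0 le_rfl
  have := h ((c - u) / -a) (div_nonneg (by linarith) (by linarith))
  linarith

-- The cone `[0, ∞) × (-∞, 0]` added to `C` forces the signs of the separating functional.
lemma exists_separating_line {C : Set (ℝ × ℝ)} (hC : IsCompact C) (hCconv : Convex ℝ C)
    (hCne : C.Nonempty) {α y : ℝ} (hy : ∀ p ∈ C, p.1 ≤ α → p.2 < y) :
    ∃ a b u : ℝ, 0 ≤ a ∧ b ≤ 0 ∧ α * a + y * b < u ∧ ∀ p ∈ C, u < p.1 * a + p.2 * b := by
  have hαy : (α, y) ∉ C + Set.Ici 0 ×ˢ Set.Iic 0 := by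
    rintro ⟨p, hp, q, ⟨hq₁, hq₂⟩, hpq⟩
    have h₁ : p.1 + q.1 = α := congrArg Prod.fst hpq
    have h₂ : p.2 + q.2 = y := congrArg Prod.snd hpq
    simp only [Set.mem_Ici, Set.mem_Iic] at hq₁ hq₂
    have := hy p hp (by linarith)
    linarith
  obtain ⟨f, u, hfαy, hf⟩ := geometric_hahn_banach_point_closed
    (hCconv.add ((convex_Ici 0).prod (convex_Iic 0)))
    ((isClosed_Ici.prod isClosed_Iic).add_left_of_isCompact hC) hαy
  set a := f (1, 0)
  set b := f (0, 1)
  have hf_apply (p : ℝ × ℝ) : f p = p.1 * a + p.2 * b :=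
    calc f p = f (p.1 • (1, 0) + p.2 • (0, 1)) := by congr 1; ext <;> simp
      _ = p.1 * a + p.2 * b := by rw [map_add, map_smul, map_smul, smul_eq_mul, smul_eq_mul]
  have hf_cone (p : ℝ × ℝ) (hp : p ∈ C) (s r : ℝ) (hs : 0 ≤ s) (hr : 0 ≤ r) :
      u < (p.1 + s) * a + (p.2 - r) * b := by
    simpa [hf_apply, sub_eq_add_neg] using
      hf (p + (s, -r)) (Set.add_mem_add hp ⟨hs, by simpa using hr⟩)
  obtain ⟨p₀, hp₀⟩ := hCne
  refine ⟨a, b, u, ?_, ?_, by simpa [hf_apply] using hfαy,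
    fun p hp => by simpa using hf_cone p hp 0 0 le_rfl le_rfl⟩
  · exact nonneg_of_forall_lt_add_mul (c := p₀.1 * a + p₀.2 * b) (u := u)
      fun s hs => by linarith [hf_cone p₀ hp₀ s 0 hs le_rfl]
  · refine neg_nonneg.1 (nonneg_of_forall_lt_add_mul (c := p₀.1 * a + p₀.2 * b) (u := u)
      fun r hr => ?_)
    linarith [hf_cone p₀ hp₀ 0 r le_rfl hr]

theorem exists_lagrange_multiplier_of_isCompact {C : Set (ℝ × ℝ)} (hC : IsCompact C)
    (hCconv : Convex ℝ C) {α y : ℝ} (hfeas : ∃ p ∈ C, p.1 ≤ α)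
    (hy : ∀ p ∈ C, p.1 ≤ α → p.2 < y) :
    ∃ t, 0 ≤ t ∧ ∀ p ∈ C, p.2 - t * p.1 < y - t * α := by
  obtain ⟨p₀, hp₀, hp₀α⟩ := hfeas
  obtain ⟨a, b, u, ha, hb, hαy, hC⟩ := exists_separating_line hC hCconv ⟨p₀, hp₀⟩ hy
  -- A vertical separating line is excluded by the feasible point `p₀`.
  have hb' : b < 0 := by
    refine hb.lt_of_ne fun hb0 => ?_
    have h₀ := hC p₀ hp₀
    rw [hb0, mul_zero, add_zero] at hαy h₀
    nlinarith [mul_le_mul_of_nonneg_right hp₀α ha]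
  have hat : a = a / -b * -b := (div_mul_cancel₀ a (neg_ne_zero.2 hb'.ne)).symm
  refine ⟨a / -b, div_nonneg ha (neg_nonneg.2 hb), fun p hp => ?_⟩
  refine lt_of_mul_lt_mul_left ?_ (neg_nonneg.2 hb)
  rw [hat] at hαy hC
  linear_combination hαy.trans (hC p hp)

section Tests

variable {n : Type*} [DecidableEq n]

def IsTest (T : Matrix n n ℂ) : Prop := T.PosSemidef ∧ (1 - T).PosSemidef

lemma isTest_zero : IsTest (0 : Matrix n n ℂ) :=
  ⟨.zero, by simpa using .one⟩

lemma IsTest.one_sub {T : Matrix n n ℂ} (hT : IsTest T) : IsTest (1 - T) :=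
  ⟨hT.2, by simpa using hT.1⟩

lemma isTest_diagonal {c : n → ℂ} (h0 : 0 ≤ c) (h1 : c ≤ 1) : IsTest (diagonal c) :=
  ⟨.diagonal h0, by rw [← diagonal_one, diagonal_sub]; exact .diagonal (sub_nonneg.2 h1)⟩

lemma IsTest.re_diag_mem_Icc {T : Matrix n n ℂ} (hT : IsTest T) (i : n) :
    (T i i).re ∈ Set.Icc (0 : ℝ) 1 := by
  have h0 := Complex.le_def.1 (hT.1.diag_nonneg (i := i))
  have h1 := Complex.le_def.1 (hT.2.diag_nonneg (i := i))
  simp only [Complex.zero_re, Matrix.sub_apply, one_apply_eq, Complex.sub_re,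
    Complex.one_re] at h0 h1
  exact ⟨h0.1, by linarith⟩

lemma convex_setOf_isTest : Convex ℝ {T : Matrix n n ℂ | IsTest T} := by
  intro T hT S hS a b ha hb hab
  refine ⟨(hT.1.smul ha).add (hS.1.smul hb), ?_⟩
  have h : 1 - (a • T + b • S) = a • (1 - T) + b • (1 - S) :=
    calc 1 - (a • T + b • S) = (a + b) • 1 - (a • T + b • S) := by rw [hab, one_smul]
      _ = a • (1 - T) + b • (1 - S) := by module
  rw [h]
  exact (hT.2.smul ha).add (hS.2.smul hb)

variable [Fintype n]

section
open scoped Matrix.Norms.L2Operator MatrixOrder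

-- With the L2 operator norm the matrices form a C⋆-algebra, in which the tests are the order
-- interval `[0, 1]`.
lemma isCompact_setOf_isTest : IsCompact {T : Matrix n n ℂ | IsTest T} := by
  have h : {T : Matrix n n ℂ | IsTest T} = Set.Icc 0 1 := by
    ext T; simp [IsTest, Matrix.le_iff]
  rw [h]
  refine Metric.isCompact_of_isClosed_isBounded isClosed_Icc
    ((Metric.isBounded_iff_subset_closedBall 0).2 ⟨‖(1 : Matrix n n ℂ)‖, fun T hT => ?_⟩)
  simpa using CStarAlgebra.norm_le_norm_of_nonneg_of_le hT.1 hT.2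

end

lemma IsTest.star_mul_mul {T : Matrix n n ℂ} (hT : IsTest T) {U : Matrix n n ℂ}
    (hU : U ∈ unitaryGroup n ℂ) : IsTest (star U * T * U) := by
  refine ⟨by simpa [star_eq_conjTranspose] using hT.1.conjTranspose_mul_mul_same U, ?_⟩
  have h := hT.2.conjTranspose_mul_mul_same U
  rwa [← star_eq_conjTranspose, mul_sub, sub_mul, mul_one, mem_unitaryGroup_iff'.1 hU] at h

lemma Matrix.IsHermitian.trace_mul_eq_sum_eigenvalues {A : Matrix n n ℂ} (hA : A.IsHermitian)
    (T : Matrix n n ℂ) :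
    (T * A).trace = ∑ i, (star (hA.eigenvectorUnitary : Matrix n n ℂ) * T *
      hA.eigenvectorUnitary) i i * hA.eigenvalues i := by
  conv_lhs => rw [hA.spectral_theorem, Unitary.conjStarAlgAut_apply, ← mul_assoc, ← mul_assoc,
    trace_mul_cycle, ← mul_assoc]
  simp [Matrix.trace, Matrix.mul_diagonal]

lemma IsTest.re_trace_mul_le {A T : Matrix n n ℂ} (hA : A.IsHermitian) (hT : IsTest T) :
    (T * A).trace.re ≤ ∑ i, if 0 ≤ hA.eigenvalues i then hA.eigenvalues i else 0 := by
  rw [hA.trace_mul_eq_sum_eigenvalues, Complex.re_sum]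
  refine Finset.sum_le_sum fun i _ => ?_
  obtain ⟨h0, h1⟩ := (hT.star_mul_mul hA.eigenvectorUnitary.2).re_diag_mem_Icc i
  simp only [Complex.mul_re, Complex.ofReal_re, Complex.ofReal_im, mul_zero, sub_zero]
  split_ifs <;> nlinarith

end Tests

section NonnegProj

variable {d : ℕ}

lemma star_mul_nonnegProj_mul {A : Matrix (Fin d) (Fin d) ℂ} (hA : A.IsHermitian) :
    star (hA.eigenvectorUnitary : Matrix (Fin d) (Fin d) ℂ) * nonnegProj A *
      hA.eigenvectorUnitary =
      diagonal (fun i => if 0 ≤ hA.eigenvalues i then (1 : ℂ) else 0) := by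
  have hU := hA.eigenvectorUnitary.2
  rw [nonnegProj, dif_pos hA, ← mul_assoc, ← mul_assoc, mem_unitaryGroup_iff'.1 hU, one_mul,
    mul_assoc, mem_unitaryGroup_iff'.1 hU, mul_one]

lemma isTest_nonnegProj {A : Matrix (Fin d) (Fin d) ℂ} (hA : A.IsHermitian) :
    IsTest (nonnegProj A) := by
  have h := (isTest_diagonal (c := fun i => if 0 ≤ hA.eigenvalues i then (1 : ℂ) else 0)
    (fun i => by dsimp; split_ifs <;> norm_num)
    (fun i => by dsimp; split_ifs <;> norm_num)).star_mul_mul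
    (Unitary.star_mem hA.eigenvectorUnitary.2)
  rw [star_star] at h
  rwa [nonnegProj, dif_pos hA]

lemma IsTest.re_trace_mul_le_nonnegProj {A T : Matrix (Fin d) (Fin d) ℂ} (hA : A.IsHermitian)
    (hT : IsTest T) : (T * A).trace.re ≤ (nonnegProj A * A).trace.re := by
  refine (hT.re_trace_mul_le hA).trans_eq ?_
  rw [hA.trace_mul_eq_sum_eigenvalues, star_mul_nonnegProj_mul, Complex.re_sum]
  refine Finset.sum_congr rfl fun i _ => ?_
  split_ifs <;> simp [*]

end NonnegProj

section Duality

variable {d : ℕ} {ρ σ : Matrix (Fin d) (Fin d) ℂ} {α t : ℝ}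

def dualObjective (ρ σ : Matrix (Fin d) (Fin d) ℂ) (α t : ℝ) : ℝ :=
  (nonnegProj (t • ρ - σ) * σ).trace.re + t * (((1 - nonnegProj (t • ρ - σ)) * ρ).trace.re - α)

lemma re_trace_one_sub_mul (X M : Matrix (Fin d) (Fin d) ℂ) :
    ((1 - X) * M).trace.re = M.trace.re - (X * M).trace.re := by
  rw [Matrix.sub_mul, one_mul, trace_sub, Complex.sub_re]

lemma re_trace_mul_smul_sub (X : Matrix (Fin d) (Fin d) ℂ) :
    (X * (t • ρ - σ)).trace.re = t * (X * ρ).trace.re - (X * σ).trace.re := by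
  rw [Matrix.mul_sub, Matrix.mul_smul, trace_sub, trace_smul, Complex.sub_re, Complex.real_smul,
    Complex.re_ofReal_mul]

lemma dualObjective_le (hρ : ρ.IsHermitian) (hσ : σ.IsHermitian) (hσtr : σ.trace = 1)
    (ht : 0 ≤ t) {T : Matrix (Fin d) (Fin d) ℂ} (hT : IsTest T) (hTα : (T * ρ).trace.re ≤ α) :
    dualObjective ρ σ α t ≤ 1 - (T * σ).trace.re := by
  have hmax := hT.one_sub.re_trace_mul_le_nonnegProj ((hρ.smul (.all t)).sub hσ)
  rw [re_trace_mul_smul_sub, re_trace_mul_smul_sub, re_trace_one_sub_mul,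
    re_trace_one_sub_mul, hσtr, Complex.one_re] at hmax
  rw [dualObjective, re_trace_one_sub_mul]
  linarith [mul_le_mul_of_nonneg_left hTα ht]

lemma exists_lt_dualObjective (hρ : ρ.IsHermitian) (hσ : σ.IsHermitian) (hσtr : σ.trace = 1)
    (hα : 0 ≤ α) {w : ℝ}
    (hw : ∀ T, IsTest T → (T * ρ).trace.re ≤ α → w < 1 - (T * σ).trace.re) :
    ∃ t, 0 ≤ t ∧ w < dualObjective ρ σ α t := by
  let φ : Matrix (Fin d) (Fin d) ℂ → ℝ × ℝ := fun T => ((T * ρ).trace.re, (T * σ).trace.re)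
  have hφ : IsLinearMap ℝ φ :=
    ⟨fun T S => by simp [φ, Matrix.add_mul],
      fun c T => by simp [φ, Complex.real_smul]⟩
  obtain ⟨t, ht, hsep⟩ := exists_lagrange_multiplier_of_isCompact (y := 1 - w)
    (isCompact_setOf_isTest.image (by fun_prop)) (convex_setOf_isTest.is_linear_image hφ)
    ⟨φ 0, ⟨0, isTest_zero, rfl⟩, by simpa [φ] using hα⟩
    (by rintro _ ⟨T, hT, rfl⟩ hTα; linarith [hw T hT hTα])
  have hQ := hsep _ ⟨_, (isTest_nonnegProj ((hρ.smul (.all t)).sub hσ)).one_sub, rfl⟩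
  refine ⟨t, ht, ?_⟩
  simp only [φ, re_trace_one_sub_mul, hσtr, Complex.one_re] at hQ
  rw [dualObjective, re_trace_one_sub_mul]
  linarith

lemma dualObjective_le_qBeta (hρ : ρ.IsHermitian) (hσ : σ.IsHermitian) (hσtr : σ.trace = 1)
    (hα : 0 ≤ α) (ht : 0 ≤ t) : dualObjective ρ σ α t ≤ qBeta α ρ σ :=
  le_csInf ⟨1, 0, isTest_zero.1, isTest_zero.2, by simpa using hα, by simp⟩
    fun _ ⟨T, hT₀, hT₁, hTα, hb⟩ => hb ▸ dualObjective_le hρ hσ hσtr ht ⟨hT₀, hT₁⟩ hTα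

lemma qBeta_le (hρ : ρ.IsHermitian) (hσ : σ.IsHermitian) (hσtr : σ.trace = 1)
    {T : Matrix (Fin d) (Fin d) ℂ} (hT : IsTest T) (hTα : (T * ρ).trace.re ≤ α) :
    qBeta α ρ σ ≤ 1 - (T * σ).trace.re :=
  csInf_le ⟨dualObjective ρ σ α 0, fun _ ⟨_, hS₀, hS₁, hSα, hb⟩ =>
    hb ▸ dualObjective_le hρ hσ hσtr le_rfl ⟨hS₀, hS₁⟩ hSα⟩ ⟨T, hT.1, hT.2, hTα, rfl⟩

end Duality

theorem quantum_tradeoff_variational_general {d : ℕ} (ρ σ : Matrix (Fin d) (Fin d) ℂ)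
    (hρ : ρ.PosSemidef)
    (hσ : σ.PosSemidef) (hσtr : σ.trace = 1)
    (α : ℝ) (hα : α ∈ Set.Icc (0 : ℝ) 1) :
    qBeta α ρ σ =
      sSup { v : ℝ | ∃ t : ℝ, 0 ≤ t ∧
        v = ((nonnegProj (t • ρ - σ)) * σ).trace.re
            + t * (((1 - nonnegProj (t • ρ - σ)) * ρ).trace.re - α) } := by
  symm
  refine csSup_eq_of_forall_le_of_forall_lt_exists_gt ⟨_, 0, le_rfl, rfl⟩ ?_ fun w hw => ?_
  · rintro _ ⟨t, ht, rfl⟩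
    exact dualObjective_le_qBeta hρ.1 hσ.1 hσtr hα.1 ht
  · obtain ⟨t, ht, hlt⟩ := exists_lt_dualObjective hρ.1 hσ.1 hσtr hα.1 fun T hT hTα =>
      hw.trans_le (qBeta_le hρ.1 hσ.1 hσtr hT hTα)
    exact ⟨_, ⟨t, ht, rfl⟩, hlt⟩

/-- Variational characterization of the quantum error trade-off (Lemma 1):
`β_α(ρ,σ) = sup_{t ≥ 0} { Tr[σ Π_t] + t (Tr[ρ (I − Π_t)] − α) }`. -/
theorem quantum_tradeoff_variational {d : ℕ} (ρ σ : Matrix (Fin d) (Fin d) ℂ)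
    (hρ : ρ.PosSemidef) (hρtr : ρ.trace = 1)
    (hσ : σ.PosSemidef) (hσtr : σ.trace = 1)
    (α : ℝ) (hα : α ∈ Set.Icc (0 : ℝ) 1) :
    qBeta α ρ σ =
      sSup { v : ℝ | ∃ t : ℝ, 0 ≤ t ∧
        v = ((nonnegProj (t • ρ - σ)) * σ).trace.re
            + t * (((1 - nonnegProj (t • ρ - σ)) * ρ).trace.re - α) } :=
  quantum_tradeoff_variational_general ρ σ hρ hσ hσtr α hα
end
end

section
/- Let ρ and σ be density matrices on ℂ^d with spectral decompositions ρ = Σ_i λ_i |x_i⟩⟨x_i| and σ = Σ_j μ_j |y_j⟩⟨y_j| (orthonormal eigenbases {x_i} and {y_j}), and let P and Q be the associated Nussbaum–Szkoła distributions. Then for every s with 0 ≤ s < 1 and every α with 0 ≤ α ≤ 1 − s, the quantum and classical optimal type-II errors satisfy β_α(ρ,σ) ≥ s · β_{α/(1−s)}(P,Q). -/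
/-! Fix a quantum test `T` and put `a i j = ⟨x i, T y j⟩`, `g i j = ⟨x i, (1 - T) y j⟩`, so that
`a i j + g i j = ⟨x i, y j⟩`. Since `0 ≤ T ≤ 1` forces `T² ≤ T`, Parseval in the basis `y` gives
`∑ λ i |a i j|² ≤ Tr[Tρ]`, and symmetrically `∑ μ j |g i j|² ≤ Tr[(1 - T)σ]`. The elementary
inequality `s(1 - s)|a + g|² ≤ s|a|² + (1 - s)|g|²` lets one pick, entry by entry, `π i j ∈ [0, 1]`
with `|a + g|² π ≤ |a|² / (1 - s)` and `s |a + g|² (1 - π) ≤ |g|²`. This classical test has type-I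
error at most `α / (1 - s)`, and `s` times its type-II error is at most that of `T`. -/

open Matrix BigOperators ComplexOrder

noncomputable section

/-- The optimal classical type-II error trade-off for randomized tests. -/
def cBeta {X : Type*} [Fintype X] (α : ℝ) (P Q : X → ℝ) : ℝ :=
  sInf { b : ℝ | ∃ π : X → ℝ, (∀ x, 0 ≤ π x ∧ π x ≤ 1) ∧
    (∑ x, P x * π x) ≤ α ∧ b = ∑ x, Q x * (1 - π x) }

theorem mul_one_sub_mul_norm_add_sq_le {E : Type*} [SeminormedAddGroup E] {s : ℝ}
    (hs0 : 0 ≤ s) (hs1 : s ≤ 1) (a g : E) :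
    s * (1 - s) * ‖a + g‖ ^ 2 ≤ s * ‖a‖ ^ 2 + (1 - s) * ‖g‖ ^ 2 := by
  have h : ‖a + g‖ ^ 2 ≤ (‖a‖ + ‖g‖) ^ 2 := by gcongr; exact norm_add_le a g
  nlinarith [sq_nonneg (s * ‖a‖ - (1 - s) * ‖g‖), mul_nonneg hs0 (sub_nonneg.2 hs1)]

theorem exists_mem_Icc_mul_le_and_mul_one_sub_le {s a c g : ℝ} (hs1 : s < 1) (ha : 0 ≤ a)
    (hg : 0 ≤ g) (h : s * (1 - s) * c ≤ s * a + (1 - s) * g) :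
    ∃ t ∈ Set.Icc (0 : ℝ) 1, c * t ≤ a / (1 - s) ∧ s * (c * (1 - t)) ≤ g := by
  have h1s : 0 < 1 - s := sub_pos.2 hs1
  rcases le_or_gt ((1 - s) * c) a with hac | hac
  · exact ⟨1, by simp, by rw [le_div_iff₀ h1s]; linarith, by simpa using hg⟩
  · have hc : 0 < c := pos_of_mul_pos_right (ha.trans_lt hac) h1s.le
    refine ⟨a / ((1 - s) * c), ⟨by positivity, (div_le_one (by positivity)).2 hac.le⟩, ?_, ?_⟩
    · exact le_of_eq (by field_simp)
    · rw [← mul_le_mul_iff_right₀ h1s]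
      field_simp
      nlinarith

theorem exists_test_of_norm_add_sq {X E : Type*} [Fintype X] [SeminormedAddGroup E] {s : ℝ}
    (hs0 : 0 ≤ s) (hs1 : s < 1) {w v : X → ℝ} (hw : ∀ x, 0 ≤ w x) (hv : ∀ x, 0 ≤ v x)
    (a g : X → E) :
    ∃ π : X → ℝ, (∀ x, 0 ≤ π x ∧ π x ≤ 1) ∧
      ∑ x, w x * ‖a x + g x‖ ^ 2 * π x ≤ (∑ x, w x * ‖a x‖ ^ 2) / (1 - s) ∧
      s * ∑ x, v x * ‖a x + g x‖ ^ 2 * (1 - π x) ≤ ∑ x, v x * ‖g x‖ ^ 2 := by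
  choose π hπ hPπ hQπ using fun x => exists_mem_Icc_mul_le_and_mul_one_sub_le hs1
    (sq_nonneg ‖a x‖) (sq_nonneg ‖g x‖) (mul_one_sub_mul_norm_add_sq_le hs0 hs1.le (a x) (g x))
  refine ⟨π, hπ, ?_, ?_⟩
  · rw [Finset.sum_div]
    refine Finset.sum_le_sum fun x _ => ?_
    rw [mul_assoc, mul_div_assoc]
    exact mul_le_mul_of_nonneg_left (hPπ x) (hw x)
  · rw [Finset.mul_sum]
    refine Finset.sum_le_sum fun x _ => ?_
    rw [mul_assoc, mul_left_comm]
    exact mul_le_mul_of_nonneg_left (hQπ x) (hv x)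

theorem cBeta_le {X : Type*} [Fintype X] {α : ℝ} {P Q : X → ℝ} (hQ : ∀ x, 0 ≤ Q x)
    {π : X → ℝ} (hπ : ∀ x, 0 ≤ π x ∧ π x ≤ 1) (hPπ : ∑ x, P x * π x ≤ α) :
    cBeta α P Q ≤ ∑ x, Q x * (1 - π x) := by
  refine csInf_le ⟨0, ?_⟩ ⟨π, hπ, hPπ, rfl⟩
  rintro b ⟨π', hπ', -, rfl⟩
  exact Finset.sum_nonneg fun x _ => mul_nonneg (hQ x) (sub_nonneg.2 (hπ' x).2)

theorem le_qBeta {d : ℕ} {α b : ℝ} {ρ σ : Matrix (Fin d) (Fin d) ℂ} (hα : 0 ≤ α)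
    (h : ∀ T : Matrix (Fin d) (Fin d) ℂ, T.PosSemidef → (1 - T).PosSemidef →
      (T * ρ).trace.re ≤ α → b ≤ 1 - (T * σ).trace.re) :
    b ≤ qBeta α ρ σ := by
  refine le_csInf ⟨1, 0, .zero, by simpa using .one, by simpa using hα, by simp⟩ ?_
  rintro _ ⟨T, hT, hT1, hTρ, rfl⟩
  exact h T hT hT1 hTρ

namespace Matrix

variable {ι n 𝕜 : Type*} [Fintype ι] [Fintype n] [RCLike 𝕜]

theorem IsHermitian.norm_dotProduct_mulVec_comm {F : Matrix n n 𝕜} (hF : F.IsHermitian)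
    (u w : n → 𝕜) : ‖star u ⬝ᵥ F *ᵥ w‖ = ‖star w ⬝ᵥ F *ᵥ u‖ := by
  rw [star_dotProduct, star_mulVec, ← dotProduct_mulVec, hF.eq, norm_star]

theorem trace_mul_sum_smul_vecMulVec (E : Matrix n n 𝕜) (c : ι → 𝕜) (x : ι → n → 𝕜) :
    (E * ∑ i, c i • vecMulVec (x i) (star (x i))).trace = ∑ i, c i * (star (x i) ⬝ᵥ E *ᵥ x i) := by
  simp [Matrix.mul_sum, mul_vecMulVec, trace_sum, dotProduct_comm]

variable [DecidableEq n]

theorem conjTranspose_mul_transpose_of_orthonormal {x : n → n → 𝕜}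
    (hx : ∀ i j, star (x i) ⬝ᵥ x j = if i = j then 1 else 0) :
    (of x)ᵀᴴ * (of x)ᵀ = 1 := by
  ext i j
  simpa [mul_apply, dotProduct, one_apply] using hx i j

theorem sum_norm_sq_dotProduct_of_orthonormal {y : n → n → 𝕜}
    (hy : ∀ i j, star (y i) ⬝ᵥ y j = if i = j then 1 else 0) (v : n → 𝕜) :
    ∑ j, ‖star v ⬝ᵥ y j‖ ^ 2 = RCLike.re (star v ⬝ᵥ v) := by
  have hY : (of y)ᵀ * (of y)ᵀᴴ = 1 :=
    mul_eq_one_comm.mp (conjTranspose_mul_transpose_of_orthonormal hy)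
  have hexpand : star v ⬝ᵥ v = ∑ j, (star v ⬝ᵥ y j) * star (star v ⬝ᵥ y j) := by
    calc star v ⬝ᵥ v = star v ⬝ᵥ ((of y)ᵀ * (of y)ᵀᴴ) *ᵥ v := by rw [hY, one_mulVec]
      _ = (star v ᵥ* (of y)ᵀ) ⬝ᵥ ((of y)ᵀᴴ *ᵥ v) := by rw [← mulVec_mulVec, dotProduct_mulVec]
      _ = _ := by simp [mulVec, dotProduct, star_sum, vecMul, mul_comm]
  rw [hexpand, map_sum]
  simp_rw [RCLike.star_def, RCLike.mul_conj]
  simp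

theorem dotProduct_mulVec_sum_smul_vecMulVec_of_orthonormal {x : n → n → 𝕜}
    (hx : ∀ i j, star (x i) ⬝ᵥ x j = if i = j then 1 else 0) (c : n → 𝕜) (k : n) :
    star (x k) ⬝ᵥ (∑ i, c i • vecMulVec (x i) (star (x i))) *ᵥ x k = c k := by
  simp [sum_mulVec, smul_mulVec, vecMulVec_mulVec, hx]

theorem PosSemidef.nonneg_of_eq_sum_smul_vecMulVec {ρ : Matrix n n 𝕜} (hρ : ρ.PosSemidef)
    {x : n → n → 𝕜} (hx : ∀ i j, star (x i) ⬝ᵥ x j = if i = j then 1 else 0) {lam : n → ℝ}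
    (hρdec : ρ = ∑ i, (lam i : 𝕜) • vecMulVec (x i) (star (x i))) (i : n) : 0 ≤ lam i := by
  have := hρ.dotProduct_mulVec_nonneg (x i)
  rwa [hρdec, dotProduct_mulVec_sum_smul_vecMulVec_of_orthonormal hx, RCLike.ofReal_nonneg] at this

theorem PosSemidef.sub_mul_self {E : Matrix n n 𝕜} (hE : E.PosSemidef) (hE1 : (1 - E).PosSemidef) :
    (E - E * E).PosSemidef := by
  have h : E - E * E = (1 - E)ᴴ * E * (1 - E) + Eᴴ * (1 - E) * E := by
    rw [hE1.1.eq, hE.1.eq]; noncomm_ring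
  rw [h]
  exact (hE.conjTranspose_mul_mul_same _).add (hE1.conjTranspose_mul_mul_same _)

theorem PosSemidef.norm_sq_mulVec_le {E : Matrix n n 𝕜} (hE : E.PosSemidef)
    (hE1 : (1 - E).PosSemidef) (v : n → 𝕜) :
    RCLike.re (star (E *ᵥ v) ⬝ᵥ E *ᵥ v) ≤ RCLike.re (star v ⬝ᵥ E *ᵥ v) := by
  have := RCLike.nonneg_iff.1 ((hE.sub_mul_self hE1).dotProduct_mulVec_nonneg v) |>.1
  rw [star_mulVec, hE.1.eq, ← dotProduct_mulVec, mulVec_mulVec]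
  simpa [sub_mulVec, dotProduct_sub] using this

theorem sum_sum_norm_sq_dotProduct_mulVec_le {E : Matrix n n 𝕜} (hE : E.PosSemidef)
    (hE1 : (1 - E).PosSemidef) {y : n → n → 𝕜}
    (hy : ∀ i j, star (y i) ⬝ᵥ y j = if i = j then 1 else 0) (x : ι → n → 𝕜) {lam : ι → ℝ}
    (hlam : ∀ i, 0 ≤ lam i) :
    ∑ i, ∑ j, lam i * ‖star (x i) ⬝ᵥ E *ᵥ y j‖ ^ 2 ≤
      RCLike.re (E * ∑ i, (lam i : 𝕜) • vecMulVec (x i) (star (x i))).trace := by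
  rw [trace_mul_sum_smul_vecMulVec, map_sum]
  refine Finset.sum_le_sum fun i _ => ?_
  have h : ∀ j, star (x i) ⬝ᵥ E *ᵥ y j = star (E *ᵥ x i) ⬝ᵥ y j := fun j => by
    rw [dotProduct_mulVec, star_mulVec, hE.1.eq]
  simp_rw [← Finset.mul_sum, h, sum_norm_sq_dotProduct_of_orthonormal hy, RCLike.re_ofReal_mul]
  exact mul_le_mul_of_nonneg_left (hE.norm_sq_mulVec_le hE1 (x i)) (hlam i)

end Matrix

theorem nussbaum_szkola_lower_bound_general {d : ℕ} (ρ σ : Matrix (Fin d) (Fin d) ℂ)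
    (hρ : ρ.PosSemidef)
    (hσ : σ.PosSemidef) (hσtr : σ.trace = 1)
    (lam mu : Fin d → ℝ) (x y : Fin d → (Fin d → ℂ))
    (hx : ∀ i j, star (x i) ⬝ᵥ x j = if i = j then 1 else 0)
    (hy : ∀ i j, star (y i) ⬝ᵥ y j = if i = j then 1 else 0)
    (hρdec : ρ = ∑ i, (lam i : ℂ) • vecMulVec (x i) (star (x i)))
    (hσdec : σ = ∑ j, (mu j : ℂ) • vecMulVec (y j) (star (y j)))
    (P Q : Fin d × Fin d → ℝ)
    (hP : ∀ p, P p = lam p.1 * Complex.normSq (star (x p.1) ⬝ᵥ y p.2))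
    (hQ : ∀ p, Q p = mu p.2 * Complex.normSq (star (x p.1) ⬝ᵥ y p.2))
    (s α : ℝ) (hs0 : 0 ≤ s) (hs1 : s < 1) (hα0 : 0 ≤ α) :
    s * cBeta (α / (1 - s)) P Q ≤ qBeta α ρ σ := by
  have hlam := hρ.nonneg_of_eq_sum_smul_vecMulVec hx hρdec
  have hmu := hσ.nonneg_of_eq_sum_smul_vecMulVec hy hσdec
  have hQ_nonneg (p : Fin d × Fin d) : 0 ≤ Q p :=
    (hQ p).symm ▸ mul_nonneg (hmu p.2) (Complex.normSq_nonneg _)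
  refine le_qBeta hα0 fun T hT hT1 hTρ => ?_
  set a : Fin d × Fin d → ℂ := fun p => star (x p.1) ⬝ᵥ T *ᵥ y p.2
  set g : Fin d × Fin d → ℂ := fun p => star (x p.1) ⬝ᵥ (1 - T) *ᵥ y p.2
  have hag (p : Fin d × Fin d) : Complex.normSq (star (x p.1) ⬝ᵥ y p.2) = ‖a p + g p‖ ^ 2 := by
    simp [a, g, ← dotProduct_add, ← add_mulVec, Complex.normSq_eq_norm_sq]
  have htypeI : ∑ p, lam p.1 * ‖a p‖ ^ 2 ≤ α :=
    calc _ = ∑ i, ∑ j, lam i * ‖star (x i) ⬝ᵥ T *ᵥ y j‖ ^ 2 := Fintype.sum_prod_type _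
      _ ≤ (T * ρ).trace.re := hρdec ▸ sum_sum_norm_sq_dotProduct_mulVec_le hT hT1 hy x hlam
      _ ≤ α := hTρ
  have htypeII : ∑ p, mu p.2 * ‖g p‖ ^ 2 ≤ 1 - (T * σ).trace.re :=
    calc _ = ∑ j, ∑ i, mu j * ‖star (y j) ⬝ᵥ (1 - T) *ᵥ x i‖ ^ 2 := by
          rw [Fintype.sum_prod_type_right]
          simp_rw [g, hT1.1.norm_dotProduct_mulVec_comm]
      _ ≤ ((1 - T) * σ).trace.re :=
          hσdec ▸ sum_sum_norm_sq_dotProduct_mulVec_le hT1 (by simpa using hT) hx y hmu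
      _ = 1 - (T * σ).trace.re := by simp [sub_mul, trace_sub, hσtr]
  obtain ⟨π, hπ, hPπ, hQπ⟩ :=
    exists_test_of_norm_add_sq hs0 hs1 (fun p => hlam p.1) (fun p => hmu p.2) a g
  have hPπ' : ∑ p, P p * π p ≤ α / (1 - s) := by
    simp only [hP, hag]
    exact hPπ.trans (div_le_div_of_nonneg_right htypeI (sub_pos.2 hs1).le)
  calc s * cBeta (α / (1 - s)) P Q ≤ s * ∑ p, Q p * (1 - π p) :=
        mul_le_mul_of_nonneg_left (cBeta_le hQ_nonneg hπ hPπ') hs0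
    _ ≤ 1 - (T * σ).trace.re := by
        simp only [hQ, hag]
        exact hQπ.trans htypeII

/-- Theorem 1: the quantum error trade-off is lower bounded in terms of the
classical trade-off of the Nussbaum–Szkoła distributions. -/
theorem nussbaum_szkola_lower_bound {d : ℕ} (ρ σ : Matrix (Fin d) (Fin d) ℂ)
    (hρ : ρ.PosSemidef) (hρtr : ρ.trace = 1)
    (hσ : σ.PosSemidef) (hσtr : σ.trace = 1)
    (lam mu : Fin d → ℝ) (x y : Fin d → (Fin d → ℂ))
    (hx : ∀ i j, star (x i) ⬝ᵥ x j = if i = j then 1 else 0)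
    (hy : ∀ i j, star (y i) ⬝ᵥ y j = if i = j then 1 else 0)
    (hρdec : ρ = ∑ i, (lam i : ℂ) • vecMulVec (x i) (star (x i)))
    (hσdec : σ = ∑ j, (mu j : ℂ) • vecMulVec (y j) (star (y j)))
    (P Q : Fin d × Fin d → ℝ)
    (hP : ∀ p, P p = lam p.1 * Complex.normSq (star (x p.1) ⬝ᵥ y p.2))
    (hQ : ∀ p, Q p = mu p.2 * Complex.normSq (star (x p.1) ⬝ᵥ y p.2))
    (s α : ℝ) (hs0 : 0 ≤ s) (hs1 : s < 1) (hα0 : 0 ≤ α) (hα1 : α ≤ 1 - s) :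
    s * cBeta (α / (1 - s)) P Q ≤ qBeta α ρ σ :=
  nussbaum_szkola_lower_bound_general ρ σ hρ hσ hσtr lam mu x y hx hy hρdec hσdec P Q hP hQ s α hs0
    hs1 hα0
end
end

section
/- For probability mass functions P and Q on a finite set X and every α ∈ [0,1], the optimal classical type-II error satisfies β_α(P,Q) = sup_{t ≥ 0} { Σ_{x : tP(x) ≥ Q(x)} Q(x) + t ( Σ_{x : tP(x) < Q(x)} P(x) − α ) }. -/
open BigOperators Finset

noncomputable section

section AuxNP

variable {X : Type*} [Fintype X]

lemma aux_min_split (P Q : X → ℝ) (t : ℝ) :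
    (∑ x with Q x ≤ t * P x, Q x) + t * (∑ x with t * P x < Q x, P x)
      = ∑ x, min (Q x) (t * P x) := by
  rw [Finset.mul_sum,
    ← Finset.sum_filter_add_sum_filter_not Finset.univ (fun x => Q x ≤ t * P x)
      (fun x => min (Q x) (t * P x))]
  congr 1
  · exact Finset.sum_congr rfl fun x hx => by
      simp only [mem_filter] at hx; exact (min_eq_left hx.2).symm
  · have : Finset.univ.filter (fun x => ¬ (Q x ≤ t * P x))
        = Finset.univ.filter (fun x => t * P x < Q x) := by
      ext x; simp [not_le]
    rw [this]
    exact Finset.sum_congr rfl fun x hx => by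
      simp only [mem_filter] at hx; exact (min_eq_right hx.2.le).symm

lemma aux_weak (P Q : X → ℝ) (hP0 : ∀ x, 0 ≤ P x) (hQ0 : ∀ x, 0 ≤ Q x)
    (α t : ℝ) (ht : 0 ≤ t) (π : X → ℝ) (hπ01 : ∀ x, 0 ≤ π x ∧ π x ≤ 1)
    (hπα : (∑ x, P x * π x) ≤ α) :
    (∑ x with Q x ≤ t * P x, Q x) + t * ((∑ x with t * P x < Q x, P x) - α)
      ≤ ∑ x, Q x * (1 - π x) := by
  have hmin : ∑ x, min (Q x) (t * P x) ≤ ∑ x, (Q x * (1 - π x) + t * (P x * π x)) := by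
    apply Finset.sum_le_sum
    intro x _
    have h1 := (hπ01 x).1
    have h2 := (hπ01 x).2
    nlinarith [min_le_left (Q x) (t * P x), min_le_right (Q x) (t * P x)]
  rw [Finset.sum_add_distrib, ← Finset.mul_sum] at hmin
  have := aux_min_split P Q t
  have h3 : t * (∑ x, P x * π x) ≤ t * α := mul_le_mul_of_nonneg_left hπα ht
  linarith

variable {X : Type*} [Fintype X]

lemma aux_tstar (P Q : X → ℝ) (hP0 : ∀ x, 0 ≤ P x) (hP1 : ∑ x, P x = 1)
    (hQ0 : ∀ x, 0 ≤ Q x) (α : ℝ) (hα0 : 0 ≤ α) (hα1 : α ≤ 1) :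
    ∃ t : ℝ, 0 ≤ t ∧ (∑ x with t * P x < Q x, P x) ≤ α ∧
      α ≤ ∑ x with t * P x ≤ Q x, P x := by
  classical
  set s : Finset ℝ :=
    insert 0 ((Finset.univ.filter fun x => 0 < P x).image fun x => Q x / P x) with hs
  set T : Finset ℝ := s.filter (fun t => α ≤ ∑ x with t * P x ≤ Q x, P x) with hT
  have h0T : (0 : ℝ) ∈ T := by
    rw [hT, mem_filter]
    refine ⟨mem_insert_self _ _, ?_⟩
    have : (Finset.univ.filter fun x => (0:ℝ) * P x ≤ Q x) = Finset.univ := by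
      ext x; simp [hQ0 x]
    rw [this, hP1]; exact hα1
  have hTne : T.Nonempty := ⟨0, h0T⟩
  set t := T.max' hTne with htdef
  have htT : t ∈ T := T.max'_mem hTne
  have hts : t ∈ s := (mem_filter.mp htT).1
  have htα : α ≤ ∑ x with t * P x ≤ Q x, P x := (mem_filter.mp htT).2
  have ht0 : 0 ≤ t := by
    rcases mem_insert.mp hts with h | h
    · exact h.ge
    · obtain ⟨x, hx, hxe⟩ := mem_image.mp h
      simp only [mem_filter] at hx
      exact hxe ▸ div_nonneg (hQ0 x) (hP0 x)
  refine ⟨t, ht0, ?_, htα⟩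
  -- show g(t) ≤ α by contradiction
  by_contra hcon
  push_neg at hcon
  set D : Finset X := Finset.univ.filter (fun x => t * P x < Q x ∧ 0 < P x) with hD
  have hgD : (∑ x with t * P x < Q x, P x) = ∑ x ∈ D, P x := by
    rw [← Finset.sum_filter_add_sum_filter_not (Finset.univ.filter fun x => t * P x < Q x)
      (fun x => 0 < P x) P, Finset.filter_filter]
    have h2 : ∑ x ∈ (Finset.univ.filter fun x => t * P x < Q x).filter
        (fun x => ¬ 0 < P x), P x = 0 := by
      apply Finset.sum_eq_zero
      intro x hx
      simp only [mem_filter] at hx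
      exact le_antisymm (not_lt.mp hx.2) (hP0 x)
    rw [h2, add_zero]
  have hDne : D.Nonempty := by
    rcases D.eq_empty_or_nonempty with h | h
    · exfalso
      rw [hgD, h, Finset.sum_empty] at hcon
      exact absurd hcon (not_lt.mpr hα0)
    · exact h
  obtain ⟨x₀, hx₀D, hx₀min⟩ := D.exists_min_image (fun x => Q x / P x) hDne
  set t' := Q x₀ / P x₀ with ht'
  simp only [hD, mem_filter] at hx₀D
  have hPx₀ : 0 < P x₀ := hx₀D.2.2
  have htt' : t < t' := (lt_div_iff₀ hPx₀).mpr hx₀D.2.1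
  have ht's : t' ∈ s := by
    apply mem_insert_of_mem
    exact mem_image.mpr ⟨x₀, mem_filter.mpr ⟨mem_univ _, hPx₀⟩, rfl⟩
  have ht'T : t' ∈ T := by
    rw [hT, mem_filter]
    refine ⟨ht's, ?_⟩
    have hsub : D ⊆ Finset.univ.filter (fun x => t' * P x ≤ Q x) := by
      intro y hy
      have hyD := hy
      simp only [hD, mem_filter] at hyD
      have hmin := hx₀min y hy
      rw [mem_filter]
      exact ⟨mem_univ _, (le_div_iff₀ hyD.2.2).mp hmin⟩
    calc α ≤ ∑ x ∈ D, P x := by rw [← hgD]; exact hcon.le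
      _ ≤ ∑ x with t' * P x ≤ Q x, P x :=
        Finset.sum_le_sum_of_subset_of_nonneg hsub (fun x _ _ => hP0 x)
  exact absurd (T.le_max' t' ht'T) (not_le.mpr htt')

variable {X : Type*} [Fintype X]

lemma aux_opt (P Q : X → ℝ) (hP0 : ∀ x, 0 ≤ P x) (hQ0 : ∀ x, 0 ≤ Q x)
    (α t : ℝ) (hgα : (∑ x with t * P x < Q x, P x) ≤ α)
    (hαh : α ≤ ∑ x with t * P x ≤ Q x, P x) :
    ∃ π : X → ℝ, (∀ x, 0 ≤ π x ∧ π x ≤ 1) ∧ (∑ x, P x * π x) ≤ α ∧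
      (∑ x, Q x * (1 - π x)) =
        (∑ x with Q x ≤ t * P x, Q x) + t * ((∑ x with t * P x < Q x, P x) - α) := by
  classical
  set PA := ∑ x with t * P x < Q x, P x with hPA
  set PB := ∑ x with Q x = t * P x, P x with hPB
  -- partition (1)
  have hpart1 : (∑ x with t * P x ≤ Q x, P x) = PA + PB := by
    rw [← Finset.sum_filter_add_sum_filter_not (Finset.univ.filter fun x => t * P x ≤ Q x)
      (fun x => t * P x < Q x) P, Finset.filter_filter, Finset.filter_filter]
    congr 1
    · apply Finset.sum_congr _ (fun _ _ => rfl)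
      ext x; simp only [mem_filter, mem_univ, true_and]
      exact ⟨fun h => h.2, fun h => ⟨h.le, h⟩⟩
    · apply Finset.sum_congr _ (fun _ _ => rfl)
      ext x; simp only [mem_filter, mem_univ, true_and, not_lt]
      exact ⟨fun h => le_antisymm h.2 h.1, fun h => ⟨h.ge, h.le⟩⟩
  have hPB0 : 0 ≤ PB := Finset.sum_nonneg fun x _ => hP0 x
  set γ : ℝ := if PB = 0 then 0 else (α - PA) / PB with hγ
  have hkey : PA + γ * PB = α := by
    by_cases h : PB = 0
    · simp only [hγ, if_pos h, zero_mul, add_zero]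
      rw [hpart1, h, add_zero] at hαh
      linarith
    · simp only [hγ, if_neg h]
      rw [div_mul_cancel₀ _ h]; ring
  have hγ0 : 0 ≤ γ := by
    by_cases h : PB = 0
    · simp [hγ, h]
    · simp only [hγ, if_neg h]
      exact div_nonneg (by linarith) (lt_of_le_of_ne hPB0 (Ne.symm h)).le
  have hγ1 : γ ≤ 1 := by
    by_cases h : PB = 0
    · simp [hγ, h]
    · simp only [hγ, if_neg h]
      rw [div_le_one (lt_of_le_of_ne hPB0 (Ne.symm h))]
      rw [hpart1] at hαh; linarith
  set π : X → ℝ := fun x => if t * P x < Q x then 1 else if Q x = t * P x then γ else 0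
    with hπ
  have hπval1 : ∀ x, t * P x < Q x → π x = 1 := fun x h => by simp [hπ, h]
  have hπval2 : ∀ x, Q x = t * P x → π x = γ := fun x h => by
    simp [hπ, h]
  have hπval3 : ∀ x, ¬ (t * P x < Q x) → ¬ (Q x = t * P x) → π x = 0 := fun x h1 h2 => by
    simp [hπ, h1, h2]
  refine ⟨π, ?_, ?_, ?_⟩
  · intro x
    simp only [hπ]
    split_ifs
    · exact ⟨zero_le_one, le_refl 1⟩
    · exact ⟨hγ0, hγ1⟩
    · exact ⟨le_refl 0, zero_le_one⟩
  · -- ∑ P π = PA + γ PB = α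
    have : (∑ x, P x * π x) = PA + γ * PB := by
      rw [← Finset.sum_filter_add_sum_filter_not Finset.univ (fun x => t * P x < Q x)
        (fun x => P x * π x)]
      congr 1
      · exact Finset.sum_congr rfl fun x hx => by
          rw [hπval1 x (mem_filter.mp hx).2, mul_one]
      · rw [← Finset.sum_filter_add_sum_filter_not
          (Finset.univ.filter fun x => ¬ t * P x < Q x) (fun x => Q x = t * P x)
          (fun x => P x * π x), Finset.filter_filter]
        have hz : ∑ x ∈ (Finset.univ.filter fun x => ¬ t * P x < Q x).filter
            (fun x => ¬ Q x = t * P x), P x * π x = 0 := by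
          apply Finset.sum_eq_zero
          intro x hx
          simp only [mem_filter] at hx
          rw [hπval3 x hx.1.2 hx.2, mul_zero]
        rw [hz, add_zero]
        have hset : (Finset.univ.filter fun x => ¬ t * P x < Q x ∧ Q x = t * P x)
            = Finset.univ.filter fun x => Q x = t * P x := by
          ext x; simp only [mem_filter, mem_univ, true_and, not_lt]
          exact ⟨fun h => h.2, fun h => ⟨h.le, h⟩⟩
        rw [hset, Finset.mul_sum]
        exact Finset.sum_congr rfl fun x hx => by
          rw [hπval2 x (mem_filter.mp hx).2]; ring
    rw [this, hkey]
  · -- β = v(t)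
    have hβ : (∑ x, Q x * (1 - π x)) = (1 - γ) * (t * PB) + ∑ x with Q x < t * P x, Q x := by
      rw [← Finset.sum_filter_add_sum_filter_not Finset.univ (fun x => t * P x < Q x)
        (fun x => Q x * (1 - π x))]
      have h1 : ∑ x with t * P x < Q x, Q x * (1 - π x) = 0 := by
        apply Finset.sum_eq_zero
        intro x hx
        rw [hπval1 x (mem_filter.mp hx).2]; ring
      rw [h1, zero_add]
      rw [← Finset.sum_filter_add_sum_filter_not
        (Finset.univ.filter fun x => ¬ t * P x < Q x) (fun x => Q x = t * P x)
        (fun x => Q x * (1 - π x)), Finset.filter_filter, Finset.filter_filter]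
      have hset : (Finset.univ.filter fun x => ¬ t * P x < Q x ∧ Q x = t * P x)
          = Finset.univ.filter fun x => Q x = t * P x := by
        ext x; simp only [mem_filter, mem_univ, true_and, not_lt]
        exact ⟨fun h => h.2, fun h => ⟨h.le, h⟩⟩
      have hset2 : (Finset.univ.filter fun x => ¬ t * P x < Q x ∧ ¬ Q x = t * P x)
          = Finset.univ.filter fun x => Q x < t * P x := by
        ext x; simp only [mem_filter, mem_univ, true_and, not_lt]
        exact ⟨fun h => lt_of_le_of_ne h.1 h.2, fun h => ⟨h.le, h.ne⟩⟩
      rw [hset, hset2]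
      congr 1
      · rw [hPB, Finset.mul_sum, Finset.mul_sum]
        exact Finset.sum_congr rfl fun x hx => by
          have he := (mem_filter.mp hx).2
          rw [hπval2 x he, he]; ring
      · exact Finset.sum_congr rfl fun x hx => by
          have h2 := (mem_filter.mp hx).2
          rw [hπval3 x (not_lt.mpr h2.le) (ne_of_lt h2), sub_zero, mul_one]
    have hpart2 : (∑ x with Q x ≤ t * P x, Q x)
        = t * PB + ∑ x with Q x < t * P x, Q x := by
      rw [← Finset.sum_filter_add_sum_filter_not (Finset.univ.filter fun x => Q x ≤ t * P x)
        (fun x => Q x = t * P x) Q, Finset.filter_filter, Finset.filter_filter]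
      congr 1
      · have hset : (Finset.univ.filter fun x => Q x ≤ t * P x ∧ Q x = t * P x)
            = Finset.univ.filter fun x => Q x = t * P x := by
          ext x; simp only [mem_filter, mem_univ, true_and]
          exact ⟨fun h => h.2, fun h => ⟨h.le, h⟩⟩
        rw [hset, hPB, Finset.mul_sum]
        exact Finset.sum_congr rfl fun x hx => (mem_filter.mp hx).2
      · apply Finset.sum_congr _ (fun _ _ => rfl)
        ext x; simp only [mem_filter, mem_univ, true_and]
        exact ⟨fun h => lt_of_le_of_ne h.1 h.2, fun h => ⟨h.le, h.ne⟩⟩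
    rw [hβ, hpart2]
    linear_combination (-t) * hkey

end AuxNP

/-- Variational characterization of the classical error trade-off:
`β_α(P,Q) = sup_{t ≥ 0} { Σ_{x : tP(x) ≥ Q(x)} Q(x) + t (Σ_{x : tP(x) < Q(x)} P(x) − α) }`. -/
theorem classical_tradeoff_variational {X : Type*} [Fintype X] (P Q : X → ℝ)
    (hP0 : ∀ x, 0 ≤ P x) (hP1 : ∑ x, P x = 1)
    (hQ0 : ∀ x, 0 ≤ Q x) (hQ1 : ∑ x, Q x = 1)
    (α : ℝ) (hα : α ∈ Set.Icc (0 : ℝ) 1) :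
    cBeta α P Q =
      sSup { v : ℝ | ∃ t : ℝ, 0 ≤ t ∧
        v = (∑ x with Q x ≤ t * P x, Q x)
            + t * ((∑ x with t * P x < Q x, P x) - α) } := by
  classical
  obtain ⟨hα0, hα1⟩ := hα
  set S := { b : ℝ | ∃ π : X → ℝ, (∀ x, 0 ≤ π x ∧ π x ≤ 1) ∧
    (∑ x, P x * π x) ≤ α ∧ b = ∑ x, Q x * (1 - π x) } with hS
  set V := { v : ℝ | ∃ t : ℝ, 0 ≤ t ∧
    v = (∑ x with Q x ≤ t * P x, Q x)
        + t * ((∑ x with t * P x < Q x, P x) - α) } with hV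
  -- constant test α is feasible
  have hconst : (∑ x, Q x * (1 - α)) ∈ S := by
    refine ⟨fun _ => α, fun x => ⟨hα0, hα1⟩, ?_, rfl⟩
    rw [← Finset.sum_mul, hP1, one_mul]
  have hSne : S.Nonempty := ⟨_, hconst⟩
  -- weak duality: every element of V ≤ every element of S
  have hweak : ∀ v ∈ V, ∀ b ∈ S, v ≤ b := by
    rintro v ⟨t, ht0, rfl⟩ b ⟨π, hπ01, hπα, rfl⟩
    exact aux_weak P Q hP0 hQ0 α t ht0 π hπ01 hπα
  have hVne : V.Nonempty := by
    refine ⟨_, 0, le_refl 0, rfl⟩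
  have hVbdd : BddAbove V := ⟨_, fun v hv => hweak v hv _ hconst⟩
  have hSbdd : BddBelow S := by
    refine ⟨0, ?_⟩
    rintro b ⟨π, hπ01, hπα, rfl⟩
    exact Finset.sum_nonneg fun x _ =>
      mul_nonneg (hQ0 x) (by linarith [(hπ01 x).2])
  rw [cBeta, ← hS]
  apply le_antisymm
  · -- strong duality via optimal test
    obtain ⟨t, ht0, hgα, hαh⟩ := aux_tstar P Q hP0 hP1 hQ0 α hα0 hα1
    obtain ⟨π, hπ01, hπα, hπeq⟩ := aux_opt P Q hP0 hQ0 α t hgα hαh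
    calc sInf S ≤ ∑ x, Q x * (1 - π x) := csInf_le hSbdd ⟨π, hπ01, hπα, rfl⟩
      _ ≤ sSup V := hπeq ▸ le_csSup hVbdd ⟨t, ht0, rfl⟩
  · exact le_csInf hSne fun b hb => csSup_le hVne fun v hv => hweak v hv b hb
end
end

section
/- Let ρ = |x⟩⟨x| and σ = |y⟩⟨y| be pure states on ℂ^d (x, y unit vectors) with a = |⟨x|y⟩|² satisfying 0 < a < 1. For p ∈ [0,1] define α^q(p) = (2(1−p)a − 1 + √(1 − 4p(1−p)a)) / (2√(1 − 4p(1−p)a)) and β^q(p) = (2pa − 1 + √(1 − 4p(1−p)a)) / (2√(1 − 4p(1−p)a)). Then for every p ∈ [0,1] the pair (α^q(p), β^q(p)) lies on the Pareto-optimal boundary, i.e. β_{α^q(p)}(ρ,σ) = β^q(p), and the map p ↦ (α^q(p), β^q(p)) is injective on [0,1]. -/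
/-!
Write `θ u = arccos √u`, so that `cos (θ u - θ v) = √u √v + √(1-u) √(1-v)`. For a test `T` with
`t = ⟨x, T x⟩` and `s = ⟨y, T y⟩`, splitting `⟨x, y⟩ = ⟨x, T y⟩ + ⟨x, (1 - T) y⟩` and applying
Cauchy–Schwarz to `T` and `1 - T` gives `cos (θ a) ≤ cos (θ t - θ s)`, i.e. `|θ t - θ s| ≤ θ a`.
Hence `t ≤ α ≤ a` forces `θ s ≥ θ α - θ a`, i.e. `s ≤ cos² (θ α - θ a)`, with equality for the
projector onto the unit vector of `span {x, y}` at angle `θ α` from `x`. So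
`β_α = 1 - cos² (θ α - θ a)` on `[0, a]`, and `(alphaQ p a, betaQ p a)` is an algebraic
parametrization of this curve.
-/

open Matrix BigOperators ComplexOrder

noncomputable section

/-- Type-I error of the optimal pure-state test, parametrized by `p`. -/
def alphaQ (p a : ℝ) : ℝ :=
  (2 * (1 - p) * a - 1 + Real.sqrt (1 - 4 * p * (1 - p) * a)) /
    (2 * Real.sqrt (1 - 4 * p * (1 - p) * a))

/-- Type-II error of the optimal pure-state test, parametrized by `p`. -/
def betaQ (p a : ℝ) : ℝ :=
  (2 * p * a - 1 + Real.sqrt (1 - 4 * p * (1 - p) * a)) /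
    (2 * Real.sqrt (1 - 4 * p * (1 - p) * a))

open Real

def bhattacharyya (a b : ℝ) : ℝ := √a * √b + √(1 - a) * √(1 - b)

lemma cos_arccos_sqrt {u : ℝ} (hu : u ≤ 1) : cos (arccos √u) = √u :=
  cos_arccos (by linarith [sqrt_nonneg u]) (sqrt_le_one.2 hu)

lemma cos_arccos_sqrt_sub_arccos_sqrt {u v : ℝ} (hu₀ : 0 ≤ u) (hu₁ : u ≤ 1) (hv₀ : 0 ≤ v)
    (hv₁ : v ≤ 1) : cos (arccos √u - arccos √v) = bhattacharyya u v := by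
  rw [cos_sub, cos_arccos_sqrt hu₁, cos_arccos_sqrt hv₁, sin_arccos, sin_arccos, sq_sqrt hu₀,
    sq_sqrt hv₀, bhattacharyya]

lemma sqrt_le_bhattacharyya {a α t s : ℝ} (ht₀ : 0 ≤ t) (htα : t ≤ α) (hαa : α ≤ a) (ha₁ : a ≤ 1)
    (hs₀ : 0 ≤ s) (hs₁ : s ≤ 1) (h : √a ≤ bhattacharyya t s) : √s ≤ bhattacharyya α a := by
  set θ : ℝ → ℝ := fun u ↦ arccos √u
  have hθ₀ (u : ℝ) : 0 ≤ θ u := arccos_nonneg _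
  have hθ₁ (u : ℝ) : θ u ≤ π / 2 := arccos_le_pi_div_two.2 (sqrt_nonneg u)
  have hθ_anti {u v : ℝ} (huv : u ≤ v) : θ v ≤ θ u := arccos_le_arccos (sqrt_le_sqrt huv)
  have hts : |θ t - θ s| ≤ θ a := by
    rw [← cos_arccos_sqrt_sub_arccos_sqrt ht₀ (by linarith) hs₀ hs₁, ← cos_abs,
      ← cos_arccos_sqrt ha₁] at h
    have hπ : |θ t - θ s| ≤ π := by
      rw [abs_sub_le_iff]; constructor <;> linarith [hθ₀ t, hθ₀ s, hθ₁ t, hθ₁ s, pi_pos]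
    exact (strictAntiOn_cos.le_iff_ge ⟨hθ₀ a, by linarith [hθ₁ a, pi_pos]⟩
      ⟨abs_nonneg _, hπ⟩).1 h
  have hαs : θ α - θ a ≤ θ s := by
    linarith [(abs_sub_le_iff.1 hts).1, hθ_anti htα]
  calc √s = cos (θ s) := (cos_arccos_sqrt hs₁).symm
    _ ≤ cos (θ α - θ a) :=
        cos_le_cos_of_nonneg_of_le_pi (by linarith [hθ_anti hαa])
          (by linarith [hθ₁ s, pi_pos]) hαs
    _ = bhattacharyya α a :=
        cos_arccos_sqrt_sub_arccos_sqrt (by linarith) (by linarith) (by linarith) ha₁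

section Matrix

variable {n : Type*} [Fintype n]

lemma trace_mul_vecMulVec_star (T : Matrix n n ℂ) (v : n → ℂ) :
    (T * vecMulVec v (star v)).trace = star v ⬝ᵥ T *ᵥ v := by
  rw [mul_vecMulVec, trace_vecMulVec, dotProduct_comm]

lemma norm_dotProduct_mulVec_le {T : Matrix n n ℂ} (hT : T.PosSemidef) (v w : n → ℂ) :
    ‖star v ⬝ᵥ T *ᵥ w‖ ≤ √(star v ⬝ᵥ T *ᵥ v).re * √(star w ⬝ᵥ T *ᵥ w).re := by
  let := T.toSeminormedAddCommGroup hT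
  let := T.toInnerProductSpace hT
  have h := norm_inner_le_norm (𝕜 := ℂ) v w
  rw [norm_eq_sqrt_re_inner (𝕜 := ℂ) v, norm_eq_sqrt_re_inner (𝕜 := ℂ) w] at h
  rw [dotProduct_comm (star v), dotProduct_comm (star v), dotProduct_comm (star w)]
  exact h

lemma re_dotProduct_mulVec_one_sub [DecidableEq n] {T : Matrix n n ℂ} {v : n → ℂ}
    (hv : star v ⬝ᵥ v = 1) :
    (star v ⬝ᵥ (1 - T) *ᵥ v).re = 1 - (star v ⬝ᵥ T *ᵥ v).re := by
  simp [sub_mulVec, dotProduct_sub, hv]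

lemma re_dotProduct_mulVec_vecMulVec (u v : n → ℂ) :
    (star v ⬝ᵥ vecMulVec u (star u) *ᵥ v).re = Complex.normSq (star u ⬝ᵥ v) := by
  rw [vecMulVec_mulVec, op_smul_eq_smul, dotProduct_smul, smul_eq_mul,
    star_dotProduct v u, mul_comm, Complex.star_def, ← Complex.normSq_eq_conj_mul_self,
    Complex.ofReal_re]

lemma posSemidef_one_sub_vecMulVec [DecidableEq n] {u : n → ℂ} (hu : star u ⬝ᵥ u = 1) :
    (1 - vecMulVec u (star u)).PosSemidef := by
  set P := vecMulVec u (star u)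
  have hP : Pᴴ = P := (posSemidef_vecMulVec_self_star u).isHermitian
  have hPP : P * P = P := by
    rw [vecMulVec_mul_vecMulVec, hu, one_smul]
  have : 1 - P = (1 - P)ᴴ * (1 - P) := by
    rw [conjTranspose_sub, conjTranspose_one, hP, sub_mul, mul_sub, mul_sub, hPP]; simp
  rw [this]
  exact posSemidef_conjTranspose_mul_self _

lemma re_dotProduct_mulVec_mem_Icc [DecidableEq n] {T : Matrix n n ℂ} (hT : T.PosSemidef)
    (hT' : (1 - T).PosSemidef) {v : n → ℂ} (hv : star v ⬝ᵥ v = 1) :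
    (star v ⬝ᵥ T *ᵥ v).re ∈ Set.Icc 0 1 := by
  have h := hT'.re_dotProduct_nonneg v
  rw [RCLike.re_to_complex, re_dotProduct_mulVec_one_sub hv] at h
  exact ⟨hT.re_dotProduct_nonneg v, by linarith⟩

lemma normSq_dotProduct_le_one [DecidableEq n] {x y : n → ℂ} (hx : star x ⬝ᵥ x = 1)
    (hy : star y ⬝ᵥ y = 1) : Complex.normSq (star x ⬝ᵥ y) ≤ 1 := by
  have h := norm_dotProduct_mulVec_le PosSemidef.one x y
  simp only [one_mulVec, hx, hy, Complex.one_re, sqrt_one, mul_one] at h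
  rw [← Complex.sq_norm]
  exact pow_le_one₀ (norm_nonneg _) h

lemma sqrt_normSq_le_bhattacharyya [DecidableEq n] {T : Matrix n n ℂ} (hT : T.PosSemidef)
    (hT' : (1 - T).PosSemidef) {x y : n → ℂ} (hx : star x ⬝ᵥ x = 1) (hy : star y ⬝ᵥ y = 1) :
    √(Complex.normSq (star x ⬝ᵥ y))
      ≤ bhattacharyya (star x ⬝ᵥ T *ᵥ x).re (star y ⬝ᵥ T *ᵥ y).re := by
  have hsplit : star x ⬝ᵥ y = star x ⬝ᵥ T *ᵥ y + star x ⬝ᵥ (1 - T) *ᵥ y := by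
    rw [← dotProduct_add, ← add_mulVec, add_sub_cancel, one_mulVec]
  have h₁ := norm_dotProduct_mulVec_le hT x y
  have h₂ := norm_dotProduct_mulVec_le hT' x y
  rw [re_dotProduct_mulVec_one_sub hx, re_dotProduct_mulVec_one_sub hy] at h₂
  rw [← Complex.norm_def, hsplit, bhattacharyya]
  exact (norm_add_le _ _).trans (add_le_add h₁ h₂)

lemma re_dotProduct_mulVec_le_bhattacharyya_sq [DecidableEq n] {T : Matrix n n ℂ}
    (hT : T.PosSemidef) (hT' : (1 - T).PosSemidef) {x y : n → ℂ} (hx : star x ⬝ᵥ x = 1)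
    (hy : star y ⬝ᵥ y = 1) {α : ℝ} (hα : (star x ⬝ᵥ T *ᵥ x).re ≤ α)
    (hαa : α ≤ Complex.normSq (star x ⬝ᵥ y)) :
    (star y ⬝ᵥ T *ᵥ y).re ≤ bhattacharyya α (Complex.normSq (star x ⬝ᵥ y)) ^ 2 := by
  obtain ⟨ht₀, -⟩ := re_dotProduct_mulVec_mem_Icc hT hT' hx
  obtain ⟨hs₀, hs₁⟩ := re_dotProduct_mulVec_mem_Icc hT hT' hy
  have h := sqrt_le_bhattacharyya ht₀ hα hαa (normSq_dotProduct_le_one hx hy) hs₀ hs₁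
    (sqrt_normSq_le_bhattacharyya hT hT' hx hy)
  calc _ = √(star y ⬝ᵥ T *ᵥ y).re ^ 2 := (sq_sqrt hs₀).symm
    _ ≤ _ := pow_le_pow_left₀ (sqrt_nonneg _) h 2

lemma exists_unit_vector_normSq_dotProduct {x y : n → ℂ} (hx : star x ⬝ᵥ x = 1)
    (hy : star y ⬝ᵥ y = 1) (ha₀ : 0 < Complex.normSq (star x ⬝ᵥ y))
    (ha₁ : Complex.normSq (star x ⬝ᵥ y) < 1) {α : ℝ} (hα₀ : 0 ≤ α) (hα₁ : α ≤ 1) :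
    ∃ u : n → ℂ, star u ⬝ᵥ u = 1 ∧ Complex.normSq (star u ⬝ᵥ x) = α ∧
      Complex.normSq (star u ⬝ᵥ y) = bhattacharyya α (Complex.normSq (star x ⬝ᵥ y)) ^ 2 := by
  set c := star x ⬝ᵥ y
  set a := Complex.normSq c
  have hsa : √a ≠ 0 := (sqrt_pos.2 ha₀).ne'
  have hs1a : √(1 - a) ≠ 0 := (sqrt_pos.2 (by linarith)).ne'
  set z := y - c • x
  have hxz : star x ⬝ᵥ z = 0 := by simp [z, dotProduct_sub, hx, c]
  have hyz : star y ⬝ᵥ z = 1 - a := by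
    rw [dotProduct_sub, dotProduct_smul, hy, star_dotProduct y x, smul_eq_mul, Complex.star_def,
      Complex.mul_conj]
  -- `u = μ x + η z` with `z ⊥ x`; the phase of `μ` makes `⟨u, y⟩` real and nonnegative.
  set μ : ℂ := (√α / √a : ℝ) * c
  set η : ℝ := √(1 - α) / √(1 - a)
  have hμ : Complex.normSq μ = α := by
    rw [Complex.normSq_mul, Complex.normSq_ofReal, div_mul_div_comm, mul_self_sqrt hα₀,
      mul_self_sqrt ha₀.le, div_mul_cancel₀ _ ha₀.ne']
  have hμc : c * star μ = (√α * √a : ℝ) := by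
    have h : √α / √a * a = √α * √a := by
      rw [div_mul_eq_mul_div, div_eq_iff hsa, mul_assoc, mul_self_sqrt ha₀.le]
    rw [Complex.star_def, map_mul, Complex.conj_ofReal, mul_left_comm, Complex.mul_conj,
      ← Complex.ofReal_mul, h]
  have hη : η * (1 - a) = √(1 - α) * √(1 - a) := by
    rw [div_mul_eq_mul_div, div_eq_iff hs1a, mul_assoc, mul_self_sqrt (by linarith)]
  set u := μ • x + (η : ℂ) • z
  have hux : star u ⬝ᵥ x = star μ := by
    simp [u, add_dotProduct, smul_dotProduct, hx, star_dotProduct z x, hxz]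
  have huz : star u ⬝ᵥ z = (√(1 - α) * √(1 - a) : ℝ) := by
    have hzz : star z ⬝ᵥ z = 1 - a := by
      rw [show star z = star y - star c • star x by simp [z]]
      simp [sub_dotProduct, hyz, hxz]
    simp only [u, star_add, star_smul, add_dotProduct, smul_dotProduct, hxz, hzz, ← hη]
    simp
  refine ⟨u, ?_, by rw [hux, Complex.star_def, Complex.normSq_conj, hμ], ?_⟩
  · have huu : star u ⬝ᵥ u = μ * star u ⬝ᵥ x + η * star u ⬝ᵥ z := by
      simp only [u, dotProduct_add, dotProduct_smul, smul_eq_mul]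
    rw [huu, hux, huz, Complex.star_def, Complex.mul_conj, hμ, ← Complex.ofReal_mul,
      ← Complex.ofReal_add, Complex.ofReal_eq_one, ← hη, ← mul_assoc, div_mul_div_comm,
      mul_self_sqrt (by linarith), mul_self_sqrt (by linarith), div_mul_cancel₀ _ (by linarith)]
    ring
  · have hy' : y = z + c • x := by simp [z]
    rw [hy', dotProduct_add, dotProduct_smul, huz, hux, smul_eq_mul, hμc, ← Complex.ofReal_add,
      Complex.normSq_ofReal, bhattacharyya, sq, add_comm]

end Matrix

section Parametrization

variable {a : ℝ}

lemma one_sub_four_mul_mul_pos (ha₀ : 0 ≤ a) (ha₁ : a < 1) (p : ℝ) :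
    0 < 1 - 4 * p * (1 - p) * a := by
  nlinarith [mul_nonneg ha₀ (sq_nonneg (1 - 2 * p))]

lemma alphaQ_add_betaQ (ha₀ : 0 ≤ a) (ha₁ : a < 1) (p : ℝ) :
    alphaQ p a + betaQ p a = 1 - (1 - a) / √(1 - 4 * p * (1 - p) * a) := by
  have hs := (sqrt_pos.2 (one_sub_four_mul_mul_pos ha₀ ha₁ p)).ne'
  unfold alphaQ betaQ
  generalize √(1 - 4 * p * (1 - p) * a) = s at *
  field_simp
  ring

lemma alphaQ_sub_betaQ (ha₀ : 0 ≤ a) (ha₁ : a < 1) (p : ℝ) :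
    alphaQ p a - betaQ p a = a * (1 - 2 * p) / √(1 - 4 * p * (1 - p) * a) := by
  have hs := (sqrt_pos.2 (one_sub_four_mul_mul_pos ha₀ ha₁ p)).ne'
  unfold alphaQ betaQ
  generalize √(1 - 4 * p * (1 - p) * a) = s at *
  field_simp
  ring

lemma betaQ_eq_alphaQ_one_sub (p : ℝ) : betaQ p a = alphaQ (1 - p) a := by
  unfold alphaQ betaQ
  ring_nf

lemma alphaQ_mem_Icc (ha₀ : 0 ≤ a) (ha₁ : a < 1) (p : ℝ) : alphaQ p a ∈ Set.Icc 0 1 := by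
  have hd := one_sub_four_mul_mul_pos ha₀ ha₁ p
  have hs := sqrt_pos.2 hd
  have hs2 := sq_sqrt hd.le
  unfold alphaQ
  generalize √(1 - 4 * p * (1 - p) * a) = s at *
  -- since `s ^ 2 - (1 - 2 * (1 - p) * a) ^ 2 = 4 * (1 - p) ^ 2 * a * (1 - a) ≥ 0`
  obtain ⟨h₁, h₂⟩ : -s ≤ 1 - 2 * (1 - p) * a ∧ 1 - 2 * (1 - p) * a ≤ s := by
    refine abs_le_of_sq_le_sq' ?_ hs.le
    nlinarith [mul_nonneg (sq_nonneg (1 - p)) (mul_nonneg ha₀ (sub_nonneg.2 ha₁.le))]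
  rw [Set.mem_Icc, div_le_one (by positivity)]
  exact ⟨div_nonneg (by linarith) (by linarith), by linarith⟩

lemma alphaQ_mul_one_sub_alphaQ (ha₀ : 0 ≤ a) (ha₁ : a < 1) (p : ℝ) :
    alphaQ p a * (1 - alphaQ p a) = (1 - p) ^ 2 * a * (1 - a) / (1 - 4 * p * (1 - p) * a) := by
  have hd := one_sub_four_mul_mul_pos ha₀ ha₁ p
  have hs := (sqrt_pos.2 hd).ne'
  have hs2 := sq_sqrt hd.le
  unfold alphaQ
  generalize √(1 - 4 * p * (1 - p) * a) = s at *
  rw [← hs2]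
  field_simp
  linear_combination hs2

lemma alphaQ_le (ha₀ : 0 ≤ a) (ha₁ : a < 1) {p : ℝ} (hp₀ : 0 ≤ p) (hp₁ : p ≤ 1) :
    alphaQ p a ≤ a := by
  have hd := one_sub_four_mul_mul_pos ha₀ ha₁ p
  have hs₁ : √(1 - 4 * p * (1 - p) * a) ≤ 1 :=
    sqrt_le_one.2 (by nlinarith [mul_nonneg (mul_nonneg hp₀ (sub_nonneg.2 hp₁)) ha₀])
  have h : 1 - a ≤ (1 - a) / √(1 - 4 * p * (1 - p) * a) :=
    (le_div_iff₀ (sqrt_pos.2 hd)).2 (mul_le_of_le_one_right (by linarith) hs₁)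
  linarith [alphaQ_add_betaQ ha₀ ha₁ p, (alphaQ_mem_Icc ha₀ ha₁ (1 - p)).1,
    betaQ_eq_alphaQ_one_sub (a := a) p]

lemma injective_alphaQ_betaQ (ha₀ : 0 < a) (ha₁ : a < 1) :
    Function.Injective fun p ↦ (alphaQ p a, betaQ p a) := by
  -- `α + β` determines `√(1 - 4 p (1 - p) a)`, and then `α - β` determines `p`.
  refine Function.LeftInverse.injective
    (g := fun v ↦ (1 - (v.1 - v.2) * ((1 - a) / (1 - (v.1 + v.2))) / a) / 2) fun p ↦ ?_
  have hs := (sqrt_pos.2 (one_sub_four_mul_mul_pos ha₀.le ha₁ p)).ne'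
  have h1a : 1 - a ≠ 0 := sub_ne_zero.2 ha₁.ne'
  simp only [alphaQ_add_betaQ ha₀.le ha₁, alphaQ_sub_betaQ ha₀.le ha₁, sub_sub_cancel,
    div_div_cancel₀ h1a, div_mul_cancel₀ _ hs]
  field_simp
  ring

lemma one_sub_betaQ (ha₀ : 0 ≤ a) (ha₁ : a < 1) {p : ℝ} (hp₁ : p ≤ 1) :
    1 - betaQ p a = bhattacharyya (alphaQ p a) a ^ 2 := by
  obtain ⟨hα₀, hα₁⟩ := alphaQ_mem_Icc ha₀ ha₁ p
  have hd := one_sub_four_mul_mul_pos ha₀ ha₁ p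
  have hcross : √(alphaQ p a) * √(1 - alphaQ p a) * (√a * √(1 - a))
      = (1 - p) * a * (1 - a) / √(1 - 4 * p * (1 - p) * a) := by
    rw [← sqrt_mul hα₀, ← sqrt_mul ha₀, ← sqrt_mul (mul_nonneg hα₀ (by linarith)),
      alphaQ_mul_one_sub_alphaQ ha₀ ha₁,
      ← sqrt_sq (mul_nonneg (mul_nonneg (sub_nonneg.2 hp₁) ha₀) (sub_nonneg.2 ha₁.le)),
      ← sqrt_div' _ hd.le]
    congr 1
    ring
  calc 1 - betaQ p a
      = alphaQ p a * a + (1 - alphaQ p a) * (1 - a)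
        + 2 * ((1 - p) * a * (1 - a) / √(1 - 4 * p * (1 - p) * a)) := by
        have hs := (sqrt_pos.2 hd).ne'
        unfold alphaQ betaQ
        generalize √(1 - 4 * p * (1 - p) * a) = s at *
        field_simp
        ring
    _ = bhattacharyya (alphaQ p a) a ^ 2 := by
        rw [← hcross, bhattacharyya, add_sq, mul_pow, mul_pow, sq_sqrt hα₀, sq_sqrt ha₀,
          sq_sqrt (by linarith), sq_sqrt (by linarith)]
        ring

end Parametrization

theorem qBeta_vecMulVec_eq {d : ℕ} {x y : Fin d → ℂ} (hx : star x ⬝ᵥ x = 1)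
    (hy : star y ⬝ᵥ y = 1) (ha₀ : 0 < Complex.normSq (star x ⬝ᵥ y))
    (ha₁ : Complex.normSq (star x ⬝ᵥ y) < 1) {α : ℝ} (hα₀ : 0 ≤ α)
    (hαa : α ≤ Complex.normSq (star x ⬝ᵥ y)) :
    qBeta α (vecMulVec x (star x)) (vecMulVec y (star y))
      = 1 - bhattacharyya α (Complex.normSq (star x ⬝ᵥ y)) ^ 2 := by
  refine IsLeast.csInf_eq ⟨?_, ?_⟩
  · obtain ⟨u, hu, hux, huy⟩ :=
      exists_unit_vector_normSq_dotProduct hx hy ha₀ ha₁ hα₀ (hαa.trans ha₁.le)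
    refine ⟨vecMulVec u (star u), posSemidef_vecMulVec_self_star u,
      posSemidef_one_sub_vecMulVec hu, ?_, ?_⟩
    · rw [trace_mul_vecMulVec_star, re_dotProduct_mulVec_vecMulVec, hux]
    · rw [trace_mul_vecMulVec_star, re_dotProduct_mulVec_vecMulVec, huy]
  · rintro b ⟨T, hT, hT', hα, rfl⟩
    rw [trace_mul_vecMulVec_star] at hα ⊢
    linarith [re_dotProduct_mulVec_le_bhattacharyya_sq hT hT' hx hy hα hαa]

/-- Lemma 2: the Pareto-optimal error trade-off boundary for discrimination of
two pure states, parametrized by `p ∈ [0,1]`, with each `p` giving a distinct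
point of the boundary. -/
theorem pure_state_pareto_boundary {d : ℕ} (x y : Fin d → ℂ)
    (hx : star x ⬝ᵥ x = 1) (hy : star y ⬝ᵥ y = 1)
    (a : ℝ) (ha : a = Complex.normSq (star x ⬝ᵥ y)) (ha0 : 0 < a) (ha1 : a < 1) :
    (∀ p ∈ Set.Icc (0 : ℝ) 1,
      qBeta (alphaQ p a) (vecMulVec x (star x)) (vecMulVec y (star y)) = betaQ p a) ∧
    Set.InjOn (fun p : ℝ => (alphaQ p a, betaQ p a)) (Set.Icc (0 : ℝ) 1) := by
  subst ha
  refine ⟨fun p ⟨hp₀, hp₁⟩ ↦ ?_, (injective_alphaQ_betaQ ha0 ha1).injOn⟩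
  rw [qBeta_vecMulVec_eq hx hy ha0 ha1 (alphaQ_mem_Icc ha0.le ha1 p).1
    (alphaQ_le ha0.le ha1 hp₀ hp₁), ← one_sub_betaQ ha0.le ha1 hp₁, sub_sub_cancel]
end
end

section
/- Let ρ = |x⟩⟨x| and σ = |y⟩⟨y| be pure states on ℂ^d with a = |⟨x|y⟩|² ∈ (0,1), and for p ∈ (0,1) let α^q(p,a) and β^q(p,a) be defined by α^q = (2(1−p)a − 1 + √(1 − 4p(1−p)a))/(2√(1 − 4p(1−p)a)) and β^q = (2pa − 1 + √(1 − 4p(1−p)a))/(2√(1 − 4p(1−p)a)). Then the lower bounds from the Nussbaum–Szkoła-based converse with s = p are asymptotically tight: lim_{a → 0⁺} α^q(p,a) / ((1−p)·(1−p)·a) = 1 and lim_{a → 0⁺} β^q(p,a) / (p·p·a) = 1; that is, the quantum errors coincide with the products (1−s)·α^c and s·β^c of the weights (1−s), s and the classical errors α^c = (1−p)a, β^c = pa, up to a multiplicative factor tending to 1. -/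
open Filter Topology

noncomputable section

lemma alphaQ_key (p : ℝ) (hp0 : 0 < p) (hp1 : p < 1) :
    Tendsto (fun a : ℝ => alphaQ p a / ((1 - p) * ((1 - p) * a))) (𝓝[>] 0) (𝓝 1) := by
  have hp1' : (0:ℝ) < 1 - p := by linarith
  have hg : Tendsto (fun a : ℝ => Real.sqrt (1 - 4 * p * (1 - p) * a)) (𝓝[>] (0:ℝ)) (𝓝 1) := by
    have hc : Continuous fun a : ℝ => Real.sqrt (1 - 4 * p * (1 - p) * a) := by fun_prop
    have h2 := hc.continuousAt (x := (0:ℝ)) |>.tendsto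
    simp only [mul_zero, sub_zero, Real.sqrt_one] at h2
    exact h2.mono_left nhdsWithin_le_nhds
  have hF : Tendsto (fun s : ℝ => (1 + s - 2 * p) / (s * (1 + s) * (1 - p))) (𝓝 1) (𝓝 1) := by
    have h : ContinuousAt (fun s : ℝ => (1 + s - 2 * p) / (s * (1 + s) * (1 - p))) 1 := by
      apply ContinuousAt.div (by fun_prop) (by fun_prop)
      nlinarith
    have heq : (1 + (1:ℝ) - 2 * p) / ((1 + 1) * (1 - p)) = 1 := by
      rw [div_eq_one_iff_eq (by nlinarith)]; ring
    simpa [heq] using h.tendsto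
  have hcomp := hF.comp hg
  refine hcomp.congr' ?_
  have hmem : Set.Ioo (0:ℝ) 1 ∈ 𝓝[>] (0:ℝ) :=
    Ioo_mem_nhdsGT_of_mem ⟨le_refl _, by norm_num⟩
  filter_upwards [hmem] with a ha
  obtain ⟨ha0, ha1⟩ := ha
  have hpos : 0 < 1 - 4 * p * (1 - p) * a := by nlinarith [sq_nonneg (2 * p - 1)]
  set s := Real.sqrt (1 - 4 * p * (1 - p) * a) with hs
  have hs0 : 0 < s := Real.sqrt_pos.mpr hpos
  have hs2 : s ^ 2 = 1 - 4 * p * (1 - p) * a := Real.sq_sqrt hpos.le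
  show (1 + s - 2 * p) / (s * (1 + s) * (1 - p)) = alphaQ p a / ((1 - p) * ((1 - p) * a))
  rw [alphaQ, ← hs]
  rw [div_eq_div_iff (by positivity) (by positivity)]
  rw [div_mul_eq_mul_div, eq_div_iff (by positivity)]
  linear_combination (-(s * (1 - p))) * hs2

/-- Asymptotic tightness of the Nussbaum–Szkoła lower bound with `s = p` for
pure-state discrimination: the optimal quantum errors `α^q(p,a)` and `β^q(p,a)`
coincide with `(1−s)·α^c = (1−p)·(1−p)·a` and `s·β^c = p·(p·a)` up to a
multiplicative factor tending to `1` as `a → 0⁺`. -/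
theorem pure_state_bound_asymptotically_tight (p : ℝ) (hp : p ∈ Set.Ioo (0 : ℝ) 1) :
    Tendsto (fun a : ℝ => alphaQ p a / ((1 - p) * ((1 - p) * a))) (𝓝[>] 0) (𝓝 1) ∧
    Tendsto (fun a : ℝ => betaQ p a / (p * (p * a))) (𝓝[>] 0) (𝓝 1) := by
  obtain ⟨hp0, hp1⟩ := hp
  refine ⟨alphaQ_key p hp0 hp1, ?_⟩
  have hb : ∀ a, betaQ p a = alphaQ (1 - p) a := by
    intro a
    simp only [betaQ, alphaQ]
    ring_nf
  have h := alphaQ_key (1 - p) (by linarith) (by linarith)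
  simp only [sub_sub_cancel] at h
  exact h.congr (fun a => by rw [hb])
end
end
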